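/- Let G be a finite simple maximal outerplanar graph and let xy be an edge of G with d_x ≤ d_y whose common neighborhood is N(x) ∩ N(y) = {w, z} with w ≠ z, such that |N(x) ∩ N(w) \ {y}| = 0, |N(x) ∩ N(z) \ {y}| = 1, |N(y) ∩ N(w) \ {x}| = 1, and |N(y) ∩ N(z) \ {x}| = 0. Then the Lin–Lu–Yau curvature satisfies κ(x,y) = 5/d_x + 5/d_y − 2 if d_y < 2·d_x, and κ(x,y) = 4/d_x + 7/d_y − 2 if d_y ≥ 2·d_x. -/

import Mathlib

open SimpleGraph

/-- `H` is a minor of `G`: there is a family of nonempty, connected, pairwise disjoint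
branch sets in `G`, one for each vertex of `H`, with an edge of `G` between the branch
sets corresponding to each edge of `H`. -/
def SimpleGraph.IsMinorOf {W : Type*} {V : Type*} (H : SimpleGraph W) (G : SimpleGraph V) :
    Prop :=
  ∃ B : W → Set V,
    (∀ w, (G.induce (B w)).Connected) ∧
    (Pairwise fun w₁ w₂ => Disjoint (B w₁) (B w₂)) ∧
    ∀ ⦃w₁ w₂⦄, H.Adj w₁ w₂ → ∃ u ∈ B w₁, ∃ v ∈ B w₂, G.Adj u v

/-- A graph is outerplanar iff it has no `K₄` minor and no `K_{2,3}` minor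
(Chartrand–Harary). -/
def Outerplanar {V : Type*} (G : SimpleGraph V) : Prop :=
  ¬ (completeGraph (Fin 4)).IsMinorOf G ∧
  ¬ (completeBipartiteGraph (Fin 2) (Fin 3)).IsMinorOf G

/-- A graph is planar iff it has no `K₅` minor and no `K_{3,3}` minor (Wagner). -/
def Planar {V : Type*} (G : SimpleGraph V) : Prop :=
  ¬ (completeGraph (Fin 5)).IsMinorOf G ∧
  ¬ (completeBipartiteGraph (Fin 3) (Fin 3)).IsMinorOf G

/-- A maximal outerplanar graph: outerplanar, and adding any edge between two distinct
non-adjacent vertices destroys outerplanarity. -/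
def MaximalOuterplanar {V : Type*} (G : SimpleGraph V) : Prop :=
  Outerplanar G ∧ ∀ x y : V, x ≠ y → ¬ G.Adj x y →
    ¬ Outerplanar (G ⊔ fromEdgeSet {s(x, y)})

/-- The (normalized) graph Laplacian `Δf(v) = (1/d_v) ∑_{u ∈ N(v)} (f u - f v)`. -/
noncomputable def graphLap {V : Type*} (G : SimpleGraph V) [Fintype V] [DecidableRel G.Adj]
    (f : V → ℤ) (v : V) : ℝ :=
  (∑ u ∈ G.neighborFinset v, ((f u : ℝ) - (f v : ℝ))) / (G.degree v)

/-- The Lin–Lu–Yau curvature of the pair `(x, y)`, via the limit-free Laplacian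
formulation: the infimum of `Δf(x) - Δf(y)` over integer-valued functions `f` that are
`1`-Lipschitz w.r.t. the graph distance and satisfy `f y - f x = 1`. -/
noncomputable def llyCurv {V : Type*} (G : SimpleGraph V) [Fintype V] [DecidableRel G.Adj]
    (x y : V) : ℝ :=
  sInf { r : ℝ | ∃ f : V → ℤ,
    (∀ u v : V, |f u - f v| ≤ (G.dist u v : ℤ)) ∧
    f y - f x = 1 ∧
    r = graphLap G f x - graphLap G f y }

/-!
Normalise `f x = 0` and `f y = 1`. For a `1`-Lipschitz `f` every term `f q - f x + 1` (`q ~ x`)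
and `f y - f q + 1` (`q ~ y`) is nonnegative, so with `a = f w` and `b = f z` in `{0, 1}` the
neighbours `y, w, z, u` of `x` and `x, w, z, v` of `y` alone force
`Δf(x) - Δf(y) ≥ (a + 2b + 4)/d_x + (7 - 2a - b)/d_y - 2`; the minimum of the right-hand side
over `a, b` is the claimed value, attained at `(a, b) = (1, 0)` or `(0, 0)`. Both are realised by
the McShane extension of `f z = 0`, `f w = a`, `f = -1` on the other neighbours of `x`. It equals
`2` on the other neighbours of `y` because outerplanarity keeps them at distance at least `3`
from the other neighbours of `x`: a shorter path would complete a `K_{2,3}` minor with branch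
sets `{x}, {y} | {w}, {z}, path`. Finally `G` is connected (otherwise `dist` takes its junk
value `0` between components and no admissible `f` exists), since joining two components by an
edge creates no `K_4` or `K_{2,3}` minor.
-/

namespace SimpleGraph

variable {V W : Type*} {G : SimpleGraph V} {H : SimpleGraph W}

structure IsMinorModel (H : SimpleGraph W) (G : SimpleGraph V) (B : W → Set V) : Prop where
  connected : ∀ w, (G.induce (B w)).Connected
  disjoint : Pairwise fun w₁ w₂ => Disjoint (B w₁) (B w₂)
  adj : ∀ ⦃w₁ w₂⦄, H.Adj w₁ w₂ → ∃ u ∈ B w₁, ∃ v ∈ B w₂, G.Adj u v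

theorem isMinorOf_iff_exists_isMinorModel :
    H.IsMinorOf G ↔ ∃ B, H.IsMinorModel G B :=
  ⟨fun ⟨B, h₁, h₂, h₃⟩ => ⟨B, h₁, h₂, h₃⟩, fun ⟨B, h⟩ => ⟨B, h.1, h.2, h.3⟩⟩

theorem IsMinorModel.eq_of_mem {B : W → Set V} (hB : H.IsMinorModel G B) {c d : W} {u : V}
    (hc : u ∈ B c) (hd : u ∈ B d) : c = d :=
  by_contra fun h => (hB.disjoint h).ne_of_mem hc hd rfl

theorem Preconnected.reachable_of_induce {S : Set V} (hS : (G.induce S).Preconnected) {a b : V}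
    (ha : a ∈ S) (hb : b ∈ S) : G.Reachable a b :=
  (hS ⟨a, ha⟩ ⟨b, hb⟩).map (Embedding.induce S).toHom

theorem preconnected_induce_of_forall_adj_or_adj_adj {s : Set W}
    (h : ∀ a ∈ s, ∀ b ∈ s, a = b ∨ H.Adj a b ∨ ∃ c ∈ s, H.Adj a c ∧ H.Adj c b) :
    (H.induce s).Preconnected := by
  rintro ⟨a, ha⟩ ⟨b, hb⟩
  rcases h a ha b hb with rfl | hab | ⟨c, hc, hac, hcb⟩
  · rfl
  · exact Adj.reachable (G := H.induce s) hab
  · have hac' : (H.induce s).Adj ⟨a, ha⟩ ⟨c, hc⟩ := hac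
    exact hac'.reachable.trans (Adj.reachable hcb)

section Bridge

variable {x p : V} {A : Set V}

theorem adj_or_eq_of_sup_edge_adj {u v : V} (h : (G ⊔ edge x p).Adj u v) :
    G.Adj u v ∨ u = x ∧ v = p ∨ u = p ∧ v = x := by
  rw [sup_adj, edge_adj] at h
  tauto

theorem induce_sup_edge_eq {S : Set V} (h : x ∉ S ∨ p ∉ S) :
    (G ⊔ edge x p).induce S = G.induce S := by
  ext a b
  refine ⟨fun hab => ?_, fun hab => Or.inl hab⟩
  rcases adj_or_eq_of_sup_edge_adj hab with hab | ⟨ha, hb⟩ | ⟨ha, hb⟩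
  · exact hab
  · exact (h.elim (· (ha ▸ a.2)) (· (hb ▸ b.2))).elim
  · exact (h.elim (· (hb ▸ b.2)) (· (ha ▸ a.2))).elim

theorem mem_of_reachable (hA : ∀ ⦃u v⦄, G.Adj u v → u ∈ A → v ∈ A) {u v : V}
    (h : G.Reachable u v) (hu : u ∈ A) : v ∈ A := by
  obtain ⟨P⟩ := h
  induction P with
  | nil => exact hu
  | cons h _ ih => exact ih (hA h hu)

theorem subset_of_induce_preconnected (hA : ∀ ⦃u v⦄, G.Adj u v → u ∈ A → v ∈ A) {S : Set V}
    (hS : (G.induce S).Preconnected) {a : V} (ha : a ∈ S) (haA : a ∈ A) : S ⊆ A :=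
  fun _ hb => mem_of_reachable hA (hS.reachable_of_induce ha hb) haA

theorem connected_induce_inter_of_sup_edge (hA : ∀ ⦃u v⦄, G.Adj u v → u ∈ A → v ∈ A)
    (hxA : x ∈ A) (hpA : p ∉ A) {S : Set V} (hxS : x ∈ S)
    (hS : ((G ⊔ edge x p).induce S).Connected) : (G.induce (S ∩ A)).Connected := by
  classical
  -- retract `S` onto `S ∩ A` by sending the vertices outside `A` to `x`
  let r : S → ↥(S ∩ A) := fun s => if h : s.1 ∈ A then ⟨s, s.2, h⟩ else ⟨x, hxS, hxA⟩
  have hr : ∀ (s : S) (h : s.1 ∈ A), r s = ⟨s, s.2, h⟩ := fun s h => dif_pos h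
  have hrx : ∀ s : S, s.1 = x ∨ s.1 ∉ A → r s = ⟨x, hxS, hxA⟩ := by
    rintro s (h | h)
    · by_cases hs : s.1 ∈ A
      · exact (hr s hs).trans (Subtype.ext h)
      · exact dif_neg hs
    · exact dif_neg h
  have hstep : ∀ s t : S, ((G ⊔ edge x p).induce S).Adj s t →
      (G.induce (S ∩ A)).Reachable (r s) (r t) := by
    intro s t hst
    rcases adj_or_eq_of_sup_edge_adj hst with h | ⟨hs, ht⟩ | ⟨hs, ht⟩
    · by_cases hs : s.1 ∈ A
      · rw [hr s hs, hr t (hA h hs)]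
        exact Adj.reachable h
      · rw [hrx s (.inr hs), hrx t (.inr fun ht => hs (hA h.symm ht))]
    · rw [hrx s (.inl hs), hrx t (.inr ((show t.1 = p from ht) ▸ hpA))]
    · rw [hrx s (.inr ((show s.1 = p from hs) ▸ hpA)), hrx t (.inl ht)]
  refine (connected_iff _).mpr ⟨fun a b => ?_, ⟨⟨x, hxS, hxA⟩⟩⟩
  have hab := (reachable_iff_reflTransGen _ _).mp (hS.preconnected ⟨a, a.2.1⟩ ⟨b, b.2.1⟩)
  have := Relation.ReflTransGen.lift' r
    (fun s t h => (reachable_iff_reflTransGen _ _).mp (hstep s t h)) _ _ hab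
  rw [Function.onFun, hr _ a.2.2, hr _ b.2.2, ← reachable_iff_reflTransGen] at this
  exact this

theorem isMinorOf_of_sup_edge_of_subset (hA : ∀ ⦃u v⦄, G.Adj u v → u ∈ A → v ∈ A)
    (hxA : x ∈ A) (hpA : p ∉ A) {B : W → Set V} (hB : H.IsMinorModel (G ⊔ edge x p) B)
    {w₀ : W} (hx : x ∈ B w₀) (hp : p ∈ B w₀) (hside : ∀ w ≠ w₀, B w ⊆ A) :
    H.IsMinorOf G := by
  refine isMinorOf_iff_exists_isMinorModel.mpr ⟨fun w => B w ∩ A, fun w => ?_,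
    fun c d h => (hB.disjoint h).mono Set.inter_subset_left Set.inter_subset_left,
    fun c d hcd => ?_⟩
  · by_cases hw : w = w₀
    · subst hw
      exact connected_induce_inter_of_sup_edge hA hxA hpA hx (hB.connected w)
    · rw [Set.inter_eq_left.mpr (hside w hw),
        ← induce_sup_edge_eq (Or.inl fun h => hw (hB.eq_of_mem h hx))]
      exact hB.connected w
  · obtain ⟨u, hu, v, hv, huv⟩ := hB.adj hcd
    have huv' : G.Adj u v := by
      rcases adj_or_eq_of_sup_edge_adj huv with h | ⟨rfl, rfl⟩ | ⟨rfl, rfl⟩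
      · exact h
      · exact (hcd.ne ((hB.eq_of_mem hu hx).trans (hB.eq_of_mem hv hp).symm)).elim
      · exact (hcd.ne ((hB.eq_of_mem hu hp).trans (hB.eq_of_mem hv hx).symm)).elim
    by_cases hd : d = w₀
    · have hu' := hside c (hd ▸ hcd.ne) hu
      exact ⟨u, ⟨hu, hu'⟩, v, ⟨hv, hA huv' hu'⟩, huv'⟩
    · have hv' := hside d hd hv
      exact ⟨u, ⟨hu, hA huv'.symm hv'⟩, v, ⟨hv, hv'⟩, huv'⟩

theorem subset_of_induce_reachable (hA : ∀ ⦃u v⦄, G.Adj u v → u ∈ A → v ∈ A)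
    {B : W → Set V} {s : Set W} (hconn : ∀ w ∈ s, (G.induce (B w)).Preconnected)
    (hadj : ∀ c ∈ s, ∀ d ∈ s, H.Adj c d → ∃ u ∈ B c, ∃ v ∈ B d, G.Adj u v)
    {a b : s} (hab : (H.induce s).Reachable a b) (ha : B a ⊆ A) : B b ⊆ A := by
  obtain ⟨P⟩ := hab
  induction P with
  | nil => exact ha
  | @cons c d _ hcd _ ih =>
    obtain ⟨u, hu, v, hv, huv⟩ := hadj c c.2 d d.2 hcd
    exact ih (subset_of_induce_preconnected hA (hconn d d.2) hv (hA huv (ha hu)))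

theorem IsMinorModel.eq_of_sup_edge (hH : ∀ w, (H.induce {w}ᶜ).Preconnected)
    (hdeg : ∀ a b, ∃ c ≠ b, H.Adj a c) (hxp : ¬G.Reachable x p) {B : W → Set V}
    (hB : H.IsMinorModel (G ⊔ edge x p) B) {w₁ w₂ : W} (hx : x ∈ B w₁) (hp : p ∈ B w₂) :
    w₁ = w₂ := by
  by_contra hne
  have hconn : ∀ w, (G.induce (B w)).Preconnected := by
    intro w
    rw [← induce_sup_edge_eq (by
      by_contra! h
      exact hne ((hB.eq_of_mem hx h.1).trans (hB.eq_of_mem h.2 hp)))]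
    exact (hB.connected w).preconnected
  have hA : ∀ ⦃u v⦄, G.Adj u v → u ∈ {v | G.Reachable x v} → v ∈ {v | G.Reachable x v} :=
    fun _ _ h hu => hu.trans h.reachable
  -- every branch set other than `B w₂` lies in the component of `x` ...
  have hside : ∀ w ≠ w₂, B w ⊆ {v | G.Reachable x v} := by
    intro w hw
    refine subset_of_induce_reachable hA (fun w _ => hconn w) (fun c hc d hd hcd => ?_)
      (hH w₂ ⟨w₁, hne⟩ ⟨w, hw⟩) (subset_of_induce_preconnected hA (hconn w₁) hx .rfl)
    obtain ⟨u, hu, v, hv, huv⟩ := hB.adj hcd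
    rcases adj_or_eq_of_sup_edge_adj huv with h | ⟨-, rfl⟩ | ⟨rfl, -⟩
    · exact ⟨u, hu, v, hv, h⟩
    · exact (hd (hB.eq_of_mem hv hp)).elim
    · exact (hc (hB.eq_of_mem hu hp)).elim
  -- ... but `w₂` has a neighbour other than `w₁`, and the edge to it cannot be `xp`
  obtain ⟨c, hc, hw₂c⟩ := hdeg w₂ w₁
  obtain ⟨u, hu, v, hv, huv⟩ := hB.adj hw₂c
  have hvA := hside c hw₂c.ne' hv
  rcases adj_or_eq_of_sup_edge_adj huv with h | ⟨rfl, -⟩ | ⟨-, rfl⟩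
  · exact hxp ((hA h.symm hvA).trans ((hconn w₂).reachable_of_induce hu hp))
  · exact hne (hB.eq_of_mem hx hu)
  · exact hc (hB.eq_of_mem hv hx)

theorem IsMinorModel.isMinorOf_of_sup_edge_of_mem (hH : ∀ w, (H.induce {w}ᶜ).Preconnected)
    (hdeg : ∀ a b, ∃ c ≠ b, H.Adj a c) (hxp : ¬G.Reachable x p) {B : W → Set V}
    (hB : H.IsMinorModel (G ⊔ edge x p) B) {w₀ : W} (hx : x ∈ B w₀) (hp : p ∈ B w₀) :
    H.IsMinorOf G := by
  set A := {v | G.Reachable x v}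
  have hA : ∀ ⦃u v⦄, G.Adj u v → u ∈ A → v ∈ A := fun _ _ h hu => hu.trans h.reachable
  have hAc : ∀ ⦃u v⦄, G.Adj u v → u ∈ Aᶜ → v ∈ Aᶜ := fun _ _ h hu hv => hu (hA h.symm hv)
  have hconn : ∀ w ∈ ({w₀}ᶜ : Set W), (G.induce (B w)).Preconnected := fun w hw => by
    rw [← induce_sup_edge_eq (.inl fun h => hw (hB.eq_of_mem h hx))]
    exact (hB.connected w).preconnected
  have hadj : ∀ c ∈ ({w₀}ᶜ : Set W), ∀ d ∈ ({w₀}ᶜ : Set W), H.Adj c d →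
      ∃ u ∈ B c, ∃ v ∈ B d, G.Adj u v := by
    intro c hc d hd hcd
    obtain ⟨u, hu, v, hv, huv⟩ := hB.adj hcd
    rcases adj_or_eq_of_sup_edge_adj huv with h | ⟨rfl, -⟩ | ⟨rfl, -⟩
    · exact ⟨u, hu, v, hv, h⟩
    · exact (hc (hB.eq_of_mem hu hx)).elim
    · exact (hc (hB.eq_of_mem hu hp)).elim
  -- the branch sets other than `B w₀` all lie on the side of the bridge of `B w₁`
  obtain ⟨w₁, hw₁, -⟩ := hdeg w₀ w₀
  have hside : ∀ A' : Set V, (∀ ⦃u v⦄, G.Adj u v → u ∈ A' → v ∈ A') → B w₁ ⊆ A' →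
      ∀ w ≠ w₀, B w ⊆ A' := fun A' hA' h w hw =>
    subset_of_induce_reachable hA' hconn hadj (hH w₀ ⟨w₁, hw₁⟩ ⟨w, hw⟩) h
  obtain ⟨a⟩ := (hB.connected w₁).nonempty
  by_cases haA : a.1 ∈ A
  · exact isMinorOf_of_sup_edge_of_subset hA .rfl hxp hB hx hp
      (hside A hA (subset_of_induce_preconnected hA (hconn w₁ hw₁) a.2 haA))
  · rw [edge_comm] at hB
    exact isMinorOf_of_sup_edge_of_subset hAc hxp (not_not.mpr .rfl) hB hp hx
      (hside Aᶜ hAc (subset_of_induce_preconnected hAc (hconn w₁ hw₁) a.2 haA))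

/-- Adding an edge between two components creates no new minors that are 2-connected with
minimum degree at least two. -/
theorem IsMinorOf.of_sup_edge (hH : ∀ w, (H.induce {w}ᶜ).Preconnected)
    (hdeg : ∀ a b, ∃ c ≠ b, H.Adj a c) (hxp : ¬G.Reachable x p)
    (h : H.IsMinorOf (G ⊔ edge x p)) : H.IsMinorOf G := by
  obtain ⟨B, hB⟩ := isMinorOf_iff_exists_isMinorModel.mp h
  by_cases hsame : ∃ w₀, x ∈ B w₀ ∧ p ∈ B w₀
  · obtain ⟨w₀, hx, hp⟩ := hsame
    exact hB.isMinorOf_of_sup_edge_of_mem hH hdeg hxp hx hp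
  push Not at hsame
  refine isMinorOf_iff_exists_isMinorModel.mpr ⟨B, fun w => ?_, hB.disjoint, fun c d hcd => ?_⟩
  · rw [← induce_sup_edge_eq (imp_iff_not_or.mp (hsame w))]
    exact hB.connected w
  · obtain ⟨u, hu, v, hv, huv⟩ := hB.adj hcd
    rcases adj_or_eq_of_sup_edge_adj huv with h | ⟨rfl, rfl⟩ | ⟨rfl, rfl⟩
    · exact ⟨u, hu, v, hv, h⟩
    · exact (hsame c hu ((hB.eq_of_sup_edge hH hdeg hxp hu hv).symm ▸ hv)).elim
    · exact (hsame d hv ((hB.eq_of_sup_edge hH hdeg hxp hv hu).symm ▸ hu)).elim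

end Bridge

theorem completeGraph_fin_four_induce_compl_preconnected (w : Fin 4) :
    ((completeGraph (Fin 4)).induce {w}ᶜ).Preconnected := by
  refine preconnected_induce_of_forall_adj_or_adj_adj ?_
  simp only [Set.mem_compl_singleton_iff]
  revert w
  decide

theorem completeGraph_fin_four_exists_adj_ne (a b : Fin 4) :
    ∃ c ≠ b, (completeGraph (Fin 4)).Adj a c := by
  revert a b
  decide

theorem completeBipartiteGraph_two_three_induce_compl_preconnected (w : Fin 2 ⊕ Fin 3) :
    ((completeBipartiteGraph (Fin 2) (Fin 3)).induce {w}ᶜ).Preconnected := by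
  refine preconnected_induce_of_forall_adj_or_adj_adj ?_
  simp only [Set.mem_compl_singleton_iff, completeBipartiteGraph_adj]
  revert w
  decide

theorem completeBipartiteGraph_two_three_exists_adj_ne (a b : Fin 2 ⊕ Fin 3) :
    ∃ c ≠ b, (completeBipartiteGraph (Fin 2) (Fin 3)).Adj a c := by
  simp only [completeBipartiteGraph_adj]
  revert a b
  decide

end SimpleGraph

theorem MaximalOuterplanar.preconnected {V : Type*} {G : SimpleGraph V}
    (h : MaximalOuterplanar G) : G.Preconnected := by
  intro u v
  by_contra huv
  have hne : u ≠ v := by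
    rintro rfl
    exact huv .rfl
  refine h.2 u v hne (fun hadj => huv hadj.reachable) ⟨fun hK => h.1.1 ?_, fun hK => h.1.2 ?_⟩
  · exact hK.of_sup_edge completeGraph_fin_four_induce_compl_preconnected
      completeGraph_fin_four_exists_adj_ne huv
  · exact hK.of_sup_edge completeBipartiteGraph_two_three_induce_compl_preconnected
      completeBipartiteGraph_two_three_exists_adj_ne huv

namespace SimpleGraph

variable {V : Type*} {G : SimpleGraph V}

theorem completeBipartiteGraph_two_three_isMinorOf_of_walk {x y w z a b : V} (hxy : x ≠ y)
    (hwz : w ≠ z) (hxw : G.Adj x w) (hxz : G.Adj x z) (hyw : G.Adj y w) (hyz : G.Adj y z)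
    (hxa : G.Adj x a) (hyb : G.Adj y b) (P : G.Walk a b)
    (hP : ∀ q ∈ P.support, q ≠ x ∧ q ≠ y ∧ q ≠ w ∧ q ≠ z) :
    (completeBipartiteGraph (Fin 2) (Fin 3)).IsMinorOf G := by
  have hx : x ∉ P.support := fun h => (hP x h).1 rfl
  have hy : y ∉ P.support := fun h => (hP y h).2.1 rfl
  have hw : w ∉ P.support := fun h => (hP w h).2.2.1 rfl
  have hz : z ∉ P.support := fun h => (hP z h).2.2.2 rfl
  have hsingle : ∀ q, (G.induce {q}).Connected := fun _ => Connected.of_subsingleton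
  have hxP : ∃ v ∈ P.support, G.Adj x v := ⟨a, P.start_mem_support, hxa⟩
  have hyP : ∃ v ∈ P.support, G.Adj y v := ⟨b, P.end_mem_support, hyb⟩
  refine isMinorOf_iff_exists_isMinorModel.mpr
    ⟨Sum.elim ![{x}, {y}] ![{w}, {z}, {q | q ∈ P.support}], ?_, ?_, ?_⟩
  · rintro (i | j)
    · fin_cases i <;> exact hsingle _
    · fin_cases j
      · exact hsingle w
      · exact hsingle z
      · exact P.connected_induce_support
  · rintro (i | i) (j | j) hne <;> fin_cases i <;> fin_cases j <;>
      simp_all [Set.disjoint_singleton_left, Set.disjoint_singleton_right, hxw.ne, hxz.ne,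
        hyw.ne, hyz.ne, hxy.symm, hwz.symm, hxw.ne', hxz.ne', hyw.ne', hyz.ne']
  · rintro (i | i) (j | j) hij <;> fin_cases i <;> fin_cases j <;>
      simp_all [adj_comm]

end SimpleGraph

section Laplacian

variable {V : Type*} [Fintype V] {G : SimpleGraph V} [DecidableRel G.Adj]

theorem graphLap_eq_sum_add_one (f : V → ℤ) {v : V} (hv : 0 < G.degree v) :
    graphLap G f v = (∑ u ∈ G.neighborFinset v, ((f u : ℝ) - f v + 1)) / G.degree v - 1 := by
  have : (G.degree v : ℝ) ≠ 0 := by positivity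
  simp only [graphLap, Finset.sum_add_distrib, Finset.sum_sub_distrib, Finset.sum_const,
    card_neighborFinset_eq_degree, nsmul_eq_mul]
  field_simp
  ring

theorem graphLap_eq_one_sub_sum (f : V → ℤ) {v : V} (hv : 0 < G.degree v) :
    graphLap G f v = 1 - (∑ u ∈ G.neighborFinset v, ((f v : ℝ) - f u + 1)) / G.degree v := by
  have : (G.degree v : ℝ) ≠ 0 := by positivity
  simp only [graphLap, Finset.sum_add_distrib, Finset.sum_sub_distrib, Finset.sum_const,
    card_neighborFinset_eq_degree, nsmul_eq_mul]
  field_simp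
  ring

end Laplacian

namespace SimpleGraph

variable {V : Type*} {G : SimpleGraph V}

theorem abs_sub_le_one_of_adj {f : V → ℤ} (hf : ∀ a b, |f a - f b| ≤ (G.dist a b : ℤ))
    {a b : V} (h : G.Adj a b) : |f a - f b| ≤ 1 := by
  simpa [dist_eq_one_iff_adj.mpr h] using hf a b

variable (G) in
noncomputable def mcShane (S : Finset V) (hS : S.Nonempty) (g : V → ℤ) (q : V) : ℤ :=
  S.inf' hS fun s => g s + G.dist s q

variable {S : Finset V} {hS : S.Nonempty} {g : V → ℤ}

theorem mcShane_le {s : V} (hs : s ∈ S) (q : V) : G.mcShane S hS g q ≤ g s + G.dist s q :=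
  Finset.inf'_le _ hs

theorem le_mcShane {m : ℤ} {q : V} (h : ∀ s ∈ S, m ≤ g s + G.dist s q) :
    m ≤ G.mcShane S hS g q :=
  Finset.le_inf' _ _ h

theorem abs_mcShane_sub_le (hG : G.Connected) (q q' : V) :
    |G.mcShane S hS g q - G.mcShane S hS g q'| ≤ G.dist q q' := by
  have key : ∀ q q', G.mcShane S hS g q - G.dist q' q ≤ G.mcShane S hS g q' := by
    refine fun q q' => le_mcShane fun s hs => ?_
    have h₁ := mcShane_le (G := G) (hS := hS) (g := g) hs q
    have h₂ : (G.dist s q : ℤ) ≤ G.dist s q' + G.dist q' q := by exact_mod_cast hG.dist_triangle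
    linarith
  have h₁ := key q q'
  have h₂ := key q' q
  rw [dist_comm] at h₁
  rw [abs_sub_le_iff]
  constructor <;> linarith

end SimpleGraph

theorem min_le_add_div_add_div {dx dy : ℝ} (hdx : 0 < dx) (hd : dx ≤ dy) {a b : ℤ}
    (ha₀ : 0 ≤ a) (ha₁ : a ≤ 1) (hb₀ : 0 ≤ b) (hb₁ : b ≤ 1) :
    min (4 / dx + 7 / dy) (5 / dx + 5 / dy) ≤ (a + 2 * b + 4) / dx + (7 - 2 * a - b) / dy := by
  have hinv : dy⁻¹ ≤ dx⁻¹ := inv_anti₀ hdx hd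
  have hdx' : 0 < dx⁻¹ := inv_pos.mpr hdx
  have hdy : 0 < dy⁻¹ := inv_pos.mpr (hdx.trans_le hd)
  simp only [div_eq_mul_inv]
  have h₁ := min_le_left (4 * dx⁻¹ + 7 * dy⁻¹) (5 * dx⁻¹ + 5 * dy⁻¹)
  have h₂ := min_le_right (4 * dx⁻¹ + 7 * dy⁻¹) (5 * dx⁻¹ + 5 * dy⁻¹)
  interval_cases a <;> interval_cases b <;> push_cast <;> linarith

theorem four_div_add_seven_div_sub {a b : ℝ} (ha : a ≠ 0) (hb : b ≠ 0) :
    4 / a + 7 / b - (5 / a + 5 / b) = (2 * a - b) / (a * b) := by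
  field_simp
  ring

section InteriorConfig

variable {V : Type*} {G : SimpleGraph V}

/-- The configuration of the theorem: `N(x) ∩ N(y) = {w, z}`, `N(x) ∩ N(w) = {y}`,
`N(y) ∩ N(z) = {x}`, `u` is a common neighbour of `x` and `z` other than `y`, and `v` is the only
common neighbour of `y` and `w` other than `x`. -/
structure InteriorConfig13 (G : SimpleGraph V) (x y w z u v : V) : Prop where
  adj_xy : G.Adj x y
  adj_xw : G.Adj x w
  adj_xz : G.Adj x z
  adj_yw : G.Adj y w
  adj_yz : G.Adj y z
  adj_xu : G.Adj x u
  adj_zu : G.Adj z u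
  adj_yv : G.Adj y v
  adj_wv : G.Adj w v
  ne_wz : w ≠ z
  ne_uy : u ≠ y
  ne_vx : v ≠ x
  eq_of_adj_xy : ∀ q, G.Adj x q → G.Adj y q → q = w ∨ q = z
  eq_of_adj_xw : ∀ q, G.Adj x q → G.Adj w q → q = y
  eq_of_adj_yz : ∀ q, G.Adj y q → G.Adj z q → q = x
  eq_of_adj_yw : ∀ q, G.Adj y q → G.Adj w q → q ≠ x → q = v

theorem exists_interiorConfig13 [Finite V] {x y w z : V} (hxy : G.Adj x y) (hwz : w ≠ z)
    (hcom : G.neighborSet x ∩ G.neighborSet y = {w, z})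
    (hxw : ((G.neighborSet x ∩ G.neighborSet w) \ {y}).ncard = 0)
    (hxz : ((G.neighborSet x ∩ G.neighborSet z) \ {y}).ncard = 1)
    (hyw : ((G.neighborSet y ∩ G.neighborSet w) \ {x}).ncard = 1)
    (hyz : ((G.neighborSet y ∩ G.neighborSet z) \ {x}).ncard = 0) :
    ∃ u v, InteriorConfig13 G x y w z u v := by
  have hcom' : ∀ q, G.Adj x q ∧ G.Adj y q ↔ q = w ∨ q = z := by
    simpa [Set.ext_iff] using hcom
  have hxw' : ∀ q, G.Adj x q → G.Adj w q → q = y := by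
    simpa [Set.eq_empty_iff_forall_notMem, not_imp_not] using
      (Set.ncard_eq_zero (Set.toFinite _)).mp hxw
  have hyz' : ∀ q, G.Adj y q → G.Adj z q → q = x := by
    simpa [Set.eq_empty_iff_forall_notMem, not_imp_not] using
      (Set.ncard_eq_zero (Set.toFinite _)).mp hyz
  obtain ⟨u, hu⟩ := Set.ncard_eq_one.mp hxz
  obtain ⟨v, hv⟩ := Set.ncard_eq_one.mp hyw
  have hu' : (G.Adj x u ∧ G.Adj z u) ∧ u ≠ y := by
    simpa using (Set.ext_iff.mp hu u).mpr rfl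
  have hv' : ∀ q, (G.Adj y q ∧ G.Adj w q) ∧ q ≠ x ↔ q = v := by
    simpa [Set.ext_iff] using hv
  have hw := (hcom' w).mpr (.inl rfl)
  have hz := (hcom' z).mpr (.inr rfl)
  obtain ⟨⟨hyv, hwv⟩, hvx⟩ := (hv' v).mpr rfl
  exact ⟨u, v, hxy, hw.1, hz.1, hw.2, hz.2, hu'.1.1, hu'.1.2, hyv, hwv, hwz, hu'.2, hvx,
    fun q h₁ h₂ => (hcom' q).mp ⟨h₁, h₂⟩, hxw', hyz', fun q h₁ h₂ h₃ => (hv' q).mp ⟨⟨h₁, h₂⟩, h₃⟩⟩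

namespace InteriorConfig13

variable {x y w z u v : V}

theorem ne_uw (hc : InteriorConfig13 G x y w z u v) : u ≠ w := by
  rintro rfl
  exact hc.adj_yz.ne (hc.eq_of_adj_xw z hc.adj_xz hc.adj_zu.symm).symm

theorem ne_vz (hc : InteriorConfig13 G x y w z u v) : v ≠ z := by
  rintro rfl
  exact hc.adj_xw.ne (hc.eq_of_adj_yz w hc.adj_yw hc.adj_wv.symm).symm

theorem not_adj_of_adj_xy {a : V} (hc : InteriorConfig13 G x y w z u v) (ha : G.Adj x a)
    (haw : a ≠ w) (haz : a ≠ z) : ¬G.Adj y a :=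
  fun h => (hc.eq_of_adj_xy a ha h).elim haw haz

theorem three_le_dist (hc : InteriorConfig13 G x y w z u v) (hG : Outerplanar G)
    (hconn : G.Connected) {a b : V} (ha : G.Adj x a) (hay : a ≠ y) (haw : a ≠ w) (haz : a ≠ z)
    (hb : G.Adj y b) (hbx : b ≠ x) (hbw : b ≠ w) (hbz : b ≠ z) : 3 ≤ G.dist a b := by
  have hK := completeBipartiteGraph_two_three_isMinorOf_of_walk hc.adj_xy.ne hc.ne_wz
    hc.adj_xw hc.adj_xz hc.adj_yw hc.adj_yz ha hb
  have hab : a ≠ b := by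
    rintro rfl
    exact hc.not_adj_of_adj_xy ha haw haz hb
  have hnadj : ¬G.Adj a b := fun h =>
    hG.2 (hK h.toWalk (by simp [ha.ne', hay, haw, haz, hbx, hb.ne', hbw, hbz]))
  have hcommon : G.commonNeighbors a b = ∅ := by
    refine Set.eq_empty_iff_forall_notMem.mpr fun q ⟨(haq : G.Adj a q), (hbq : G.Adj b q)⟩ =>
      hG.2 (hK (.cons haq (.cons hbq.symm .nil)) ?_)
    have hqx : q ≠ x := by
      rintro rfl
      exact hc.not_adj_of_adj_xy hbq.symm hbw hbz hb
    have hqy : q ≠ y := by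
      rintro rfl
      exact hc.not_adj_of_adj_xy ha haw haz haq.symm
    have hqw : q ≠ w := by
      rintro rfl
      exact hay (hc.eq_of_adj_xw a ha haq.symm)
    have hqz : q ≠ z := by
      rintro rfl
      exact hbx (hc.eq_of_adj_yz b hb hbq.symm)
    simp [ha.ne', hay, haw, haz, hbx, hb.ne', hbw, hbz, hqx, hqy, hqw, hqz]
  have h := two_lt_edist_iff.mpr ⟨hab, hnadj, hcommon⟩
  rw [← (hconn a b).coe_dist_eq_edist] at h
  exact_mod_cast h

theorem le_sum_neighborFinset_x [Fintype V] [DecidableRel G.Adj]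
    (hc : InteriorConfig13 G x y w z u v) {f : V → ℤ}
    (hf : ∀ a b, |f a - f b| ≤ (G.dist a b : ℤ)) (hfxy : f y - f x = 1) :
    ((f w - f x + 2 * (f z - f x) + 4 : ℤ) : ℝ) ≤
      ∑ q ∈ G.neighborFinset x, ((f q : ℝ) - f x + 1) := by
  classical
  have hzu := abs_le.mp (abs_sub_le_one_of_adj hf hc.adj_zu)
  calc ((f w - f x + 2 * (f z - f x) + 4 : ℤ) : ℝ)
      ≤ ∑ q ∈ {y, w, z, u}, ((f q : ℝ) - f x + 1) := by
        rw [Finset.sum_insert (by simp [hc.adj_yw.ne, hc.adj_yz.ne, hc.ne_uy.symm]),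
          Finset.sum_insert (by simp [hc.ne_wz, hc.ne_uw.symm]), Finset.sum_pair hc.adj_zu.ne]
        have : (f z : ℝ) - 1 ≤ f u := by exact_mod_cast (by omega : f z - 1 ≤ f u)
        have hy : (f y : ℝ) = f x + 1 := by exact_mod_cast (by omega : f y = f x + 1)
        push_cast
        linarith
    _ ≤ _ := Finset.sum_le_sum_of_subset_of_nonneg
        (by simp [Finset.insert_subset_iff, hc.adj_xy, hc.adj_xw, hc.adj_xz, hc.adj_xu])
        fun q hq _ => by
          have := (abs_le.mp (abs_sub_le_one_of_adj hf ((mem_neighborFinset _ _ _).mp hq))).2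
          have : (f x : ℝ) - 1 ≤ f q := by exact_mod_cast (by omega : f x - 1 ≤ f q)
          linarith

theorem le_sum_neighborFinset_y [Fintype V] [DecidableRel G.Adj]
    (hc : InteriorConfig13 G x y w z u v) {f : V → ℤ}
    (hf : ∀ a b, |f a - f b| ≤ (G.dist a b : ℤ)) (hfxy : f y - f x = 1) :
    ((7 - 2 * (f w - f x) - (f z - f x) : ℤ) : ℝ) ≤
      ∑ q ∈ G.neighborFinset y, ((f y : ℝ) - f q + 1) := by
  classical
  have hwv := abs_le.mp (abs_sub_le_one_of_adj hf hc.adj_wv)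
  calc ((7 - 2 * (f w - f x) - (f z - f x) : ℤ) : ℝ)
      ≤ ∑ q ∈ {x, w, z, v}, ((f y : ℝ) - f q + 1) := by
        rw [Finset.sum_insert (by simp [hc.adj_xw.ne, hc.adj_xz.ne, hc.ne_vx.symm]),
          Finset.sum_insert (by simp [hc.ne_wz, hc.adj_wv.ne]), Finset.sum_pair hc.ne_vz.symm]
        have : (f v : ℝ) ≤ f w + 1 := by exact_mod_cast (by omega : f v ≤ f w + 1)
        have hy : (f y : ℝ) = f x + 1 := by exact_mod_cast (by omega : f y = f x + 1)
        push_cast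
        linarith
    _ ≤ _ := Finset.sum_le_sum_of_subset_of_nonneg
        (by simp [Finset.insert_subset_iff, hc.adj_xy.symm, hc.adj_yw, hc.adj_yz, hc.adj_yv])
        fun q hq _ => by
          have := (abs_le.mp (abs_sub_le_one_of_adj hf ((mem_neighborFinset _ _ _).mp hq))).1
          have : (f q : ℝ) ≤ f y + 1 := by exact_mod_cast (by omega : f q ≤ f y + 1)
          linarith

theorem exists_le_graphLap_sub [Fintype V] [DecidableRel G.Adj]
    (hc : InteriorConfig13 G x y w z u v) {f : V → ℤ}
    (hf : ∀ a b, |f a - f b| ≤ (G.dist a b : ℤ)) (hfxy : f y - f x = 1) :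
    ∃ a b : ℤ, 0 ≤ a ∧ a ≤ 1 ∧ 0 ≤ b ∧ b ≤ 1 ∧
      (a + 2 * b + 4) / (G.degree x : ℝ) + (7 - 2 * a - b) / (G.degree y : ℝ) - 2 ≤
        graphLap G f x - graphLap G f y := by
  have hxw := abs_le.mp (abs_sub_le_one_of_adj hf hc.adj_xw)
  have hyw := abs_le.mp (abs_sub_le_one_of_adj hf hc.adj_yw)
  have hxz := abs_le.mp (abs_sub_le_one_of_adj hf hc.adj_xz)
  have hyz := abs_le.mp (abs_sub_le_one_of_adj hf hc.adj_yz)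
  refine ⟨f w - f x, f z - f x, by omega, by omega, by omega, by omega, ?_⟩
  rw [graphLap_eq_sum_add_one f hc.adj_xy.degree_pos_left,
    graphLap_eq_one_sub_sum f hc.adj_xy.symm.degree_pos_left]
  -- the terms of both sums are nonnegative, and four of them already give the bound
  have hdx := div_le_div_of_nonneg_right (hc.le_sum_neighborFinset_x hf hfxy)
    (Nat.cast_nonneg (α := ℝ) (G.degree x))
  have hdy := div_le_div_of_nonneg_right (hc.le_sum_neighborFinset_y hf hfxy)
    (Nat.cast_nonneg (α := ℝ) (G.degree y))
  push_cast at hdx hdy ⊢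
  linarith

end InteriorConfig13

variable (G) in
/-- The largest `1`-Lipschitz function with `f z ≤ 0`, `f w ≤ c` and `f ≤ -1` on the neighbours
of `x` other than `y, w, z`. -/
noncomputable def interiorTestFun [Fintype V] [DecidableRel G.Adj] [DecidableEq V]
    (x y w z : V) (c : ℤ) : V → ℤ :=
  G.mcShane (insert z (insert w (G.neighborFinset x \ {y, w, z}))) (Finset.insert_nonempty _ _)
    fun s => if s = z then 0 else if s = w then c else -1

section interiorTestFun

variable [Fintype V] [DecidableRel G.Adj] [DecidableEq V] {x y w z : V} {c : ℤ}

theorem interiorTestFun_le_dist_z (q : V) : interiorTestFun G x y w z c q ≤ G.dist z q := by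
  unfold interiorTestFun
  exact (mcShane_le (Finset.mem_insert_self _ _) q).trans_eq (by simp)

theorem interiorTestFun_le_add_dist_w (hwz : w ≠ z) (q : V) :
    interiorTestFun G x y w z c q ≤ c + G.dist w q := by
  unfold interiorTestFun
  exact (mcShane_le (s := w) (by simp) q).trans_eq (by simp [hwz])

theorem interiorTestFun_le_dist_sub_one {s : V} (hs : G.Adj x s) (hsy : s ≠ y) (hsw : s ≠ w)
    (hsz : s ≠ z) (q : V) : interiorTestFun G x y w z c q ≤ G.dist s q - 1 := by
  unfold interiorTestFun
  exact (mcShane_le (s := s) (by simp [hs, hsy, hsw, hsz]) q).trans_eq (by simp [hsz, hsw]; ring)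

theorem le_interiorTestFun (hwz : w ≠ z) {q : V} {m : ℤ} (hz : m ≤ G.dist z q)
    (hw : m ≤ c + G.dist w q)
    (hU : ∀ s, G.Adj x s → s ≠ y → s ≠ w → s ≠ z → m + 1 ≤ G.dist s q) :
    m ≤ interiorTestFun G x y w z c q := by
  unfold interiorTestFun
  refine le_mcShane ?_
  rw [Finset.forall_mem_insert, Finset.forall_mem_insert]
  refine ⟨by simpa using hz, by simpa [hwz] using hw, fun s hs => ?_⟩
  simp only [Finset.mem_sdiff, mem_neighborFinset, Finset.mem_insert, Finset.mem_singleton,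
    not_or] at hs
  obtain ⟨hs, hsy, hsw, hsz⟩ := hs
  simp only [hsz, hsw, if_false]
  linarith [hU s hs hsy hsw hsz]

theorem abs_interiorTestFun_sub_le (hconn : G.Connected) (a b : V) :
    |interiorTestFun G x y w z c a - interiorTestFun G x y w z c b| ≤ G.dist a b :=
  abs_mcShane_sub_le hconn a b

end interiorTestFun

namespace InteriorConfig13

variable {x y w z u v : V}

theorem interiorTestFun_anchor [Fintype V] [DecidableRel G.Adj] [DecidableEq V]
    (hc : InteriorConfig13 G x y w z u v) (hconn : G.Connected) {c : ℤ} (hc₀ : 0 ≤ c)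
    (hc₁ : c ≤ 1) :
    interiorTestFun G x y w z c x = 0 ∧ interiorTestFun G x y w z c y = 1 ∧
      interiorTestFun G x y w z c w = c ∧ interiorTestFun G x y w z c z = 0 := by
  set f := interiorTestFun G x y w z c
  have one_le : ∀ {a b}, a ≠ b → (1 : ℤ) ≤ G.dist a b := fun h => by
    exact_mod_cast hconn.pos_dist_of_ne h
  have two_le : ∀ {a b}, a ≠ b → ¬G.Adj a b → (2 : ℤ) ≤ G.dist a b := fun h h' => by
    exact_mod_cast hconn.one_lt_dist_of_ne_of_not_adj h h'
  have hz : f z = 0 := le_antisymm ((interiorTestFun_le_dist_z z).trans_eq (by simp))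
    (le_interiorTestFun hc.ne_wz (by positivity) (by positivity) fun s _ _ _ hsz => by
      simpa using one_le hsz)
  have hw : f w = c := le_antisymm ((interiorTestFun_le_add_dist_w hc.ne_wz w).trans_eq (by simp))
    (le_interiorTestFun hc.ne_wz (by linarith [one_le hc.ne_wz.symm]) (by simp)
      fun s hs hsy hsw _ => by
        linarith [two_le hsw fun h => hsy (hc.eq_of_adj_xw s hs h.symm)])
  have hx : f x ≤ 0 := by
    have := interiorTestFun_le_dist_sub_one (c := c) hc.adj_xu hc.ne_uy hc.ne_uw hc.adj_zu.ne' x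
    rwa [dist_eq_one_iff_adj.mpr hc.adj_xu.symm, Nat.cast_one, sub_self] at this
  have hy : 1 ≤ f y := le_interiorTestFun hc.ne_wz
    (one_le hc.adj_yz.ne') (by linarith [one_le hc.adj_yw.ne']) fun s hs hsy hsw hsz => by
      linarith [two_le hsy fun h => hc.not_adj_of_adj_xy hs hsw hsz h.symm]
  have hxy := abs_le.mp (abs_sub_le_one_of_adj (f := f) (abs_interiorTestFun_sub_le hconn)
    hc.adj_xy)
  exact ⟨by omega, by omega, hw, hz⟩

theorem exists_lipschitz [Fintype V] [DecidableRel G.Adj]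
    (hc : InteriorConfig13 G x y w z u v) (hG : Outerplanar G) (hconn : G.Connected)
    {c : ℤ} (hc₀ : 0 ≤ c) (hc₁ : c ≤ 1) :
    ∃ f : V → ℤ, (∀ a b, |f a - f b| ≤ (G.dist a b : ℤ)) ∧
      f x = 0 ∧ f y = 1 ∧ f w = c ∧ f z = 0 ∧ f v = c + 1 ∧
      (∀ q, G.Adj x q → q ≠ y → q ≠ w → q ≠ z → f q = -1) ∧
      (∀ q, G.Adj y q → q ≠ x → q ≠ w → q ≠ z → q ≠ v → f q = 2) := by
  classical
  set f := interiorTestFun G x y w z c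
  have hf : ∀ a b, |f a - f b| ≤ (G.dist a b : ℤ) := abs_interiorTestFun_sub_le hconn
  have h1 : ∀ {a b}, G.Adj a b → -1 ≤ f a - f b ∧ f a - f b ≤ 1 := fun h =>
    abs_le.mp (abs_sub_le_one_of_adj hf h)
  have two_le : ∀ {a b}, a ≠ b → ¬G.Adj a b → (2 : ℤ) ≤ G.dist a b := fun h h' => by
    exact_mod_cast hconn.one_lt_dist_of_ne_of_not_adj h h'
  have three_le : ∀ {s q}, G.Adj x s → s ≠ y → s ≠ w → s ≠ z → G.Adj y q → q ≠ x → q ≠ w →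
      q ≠ z → (3 : ℤ) ≤ G.dist s q := fun hs hsy hsw hsz hq hqx hqw hqz => by
    exact_mod_cast hc.three_le_dist hG hconn hs hsy hsw hsz hq hqx hqw hqz
  obtain ⟨hx, hy, hw, hz⟩ := hc.interiorTestFun_anchor hconn hc₀ hc₁
  refine ⟨f, hf, hx, hy, hw, hz, ?_, fun q hxq hqy hqw hqz => ?_,
    fun q hyq hqx hqw hqz hqv => ?_⟩
  · refine le_antisymm (by linarith [(h1 hc.adj_wv).1]) (le_interiorTestFun hc.ne_wz ?_
      (by linarith [(hconn.pos_dist_of_ne hc.adj_wv.ne :)]) fun s hs hsy hsw hsz => ?_)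
    · linarith [two_le hc.ne_vz.symm fun h => hc.ne_vx (hc.eq_of_adj_yz v hc.adj_yv h)]
    · linarith [three_le hs hsy hsw hsz hc.adj_yv hc.ne_vx hc.adj_wv.ne' hc.ne_vz]
  · have := interiorTestFun_le_dist_sub_one (c := c) hxq hqy hqw hqz q
    rw [SimpleGraph.dist_self, Nat.cast_zero, zero_sub] at this
    linarith [(h1 hxq).2]
  · refine le_antisymm (by linarith [(h1 hyq).1]) (le_interiorTestFun hc.ne_wz
      (two_le (Ne.symm hqz) fun h => hqx (hc.eq_of_adj_yz q hyq h)) ?_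
      fun s hs hsy hsw hsz => ?_)
    · linarith [two_le (Ne.symm hqw) fun h => hqv (hc.eq_of_adj_yw q hyq h hqx)]
    · linarith [three_le hs hsy hsw hsz hyq hqx hqw hqz]

theorem graphLap_sub_eq [Fintype V] [DecidableRel G.Adj]
    (hc : InteriorConfig13 G x y w z u v) {f : V → ℤ} {c : ℤ}
    (hx : f x = 0) (hy : f y = 1) (hw : f w = c) (hz : f z = 0) (hv : f v = c + 1)
    (hU : ∀ q, G.Adj x q → q ≠ y → q ≠ w → q ≠ z → f q = -1)
    (hD : ∀ q, G.Adj y q → q ≠ x → q ≠ w → q ≠ z → q ≠ v → f q = 2) :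
    graphLap G f x - graphLap G f y =
      (c + 4) / (G.degree x : ℝ) + (7 - 2 * c) / (G.degree y : ℝ) - 2 := by
  classical
  have hsx : ∑ q ∈ G.neighborFinset x, ((f q : ℝ) - f x + 1) = c + 4 := by
    rw [← Finset.sum_subset (s₁ := {y, w, z})
      (by simp [Finset.insert_subset_iff, hc.adj_xy, hc.adj_xw, hc.adj_xz]) fun q hq hq' => by
        simp only [Finset.mem_insert, Finset.mem_singleton, not_or] at hq'
        simp [hU q ((mem_neighborFinset _ _ _).mp hq) hq'.1 hq'.2.1 hq'.2.2, hx]]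
    rw [Finset.sum_insert (by simp [hc.adj_yw.ne, hc.adj_yz.ne]), Finset.sum_pair hc.ne_wz]
    simp only [hx, hy, hw, hz]
    push_cast
    ring
  have hsy : ∑ q ∈ G.neighborFinset y, ((f y : ℝ) - f q + 1) = 7 - 2 * c := by
    rw [← Finset.sum_subset (s₁ := {x, w, z, v})
      (by simp [Finset.insert_subset_iff, hc.adj_xy.symm, hc.adj_yw, hc.adj_yz, hc.adj_yv])
      fun q hq hq' => by
        simp only [Finset.mem_insert, Finset.mem_singleton, not_or] at hq'
        simp [hD q ((mem_neighborFinset _ _ _).mp hq) hq'.1 hq'.2.1 hq'.2.2.1 hq'.2.2.2, hy]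
        norm_num]
    rw [Finset.sum_insert (by simp [hc.adj_xw.ne, hc.adj_xz.ne, hc.ne_vx.symm]),
      Finset.sum_insert (by simp [hc.ne_wz, hc.adj_wv.ne]), Finset.sum_pair hc.ne_vz.symm]
    simp only [hx, hy, hw, hz, hv]
    push_cast
    ring
  rw [graphLap_eq_sum_add_one f hc.adj_xy.degree_pos_left,
    graphLap_eq_one_sub_sum f hc.adj_xy.symm.degree_pos_left, hsx, hsy]
  ring

theorem llyCurv_eq [Fintype V] [DecidableRel G.Adj] (hc : InteriorConfig13 G x y w z u v)
    (hG : Outerplanar G) (hconn : G.Connected) (hd : G.degree x ≤ G.degree y) :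
    llyCurv G x y =
      min (4 / (G.degree x : ℝ) + 7 / G.degree y) (5 / G.degree x + 5 / G.degree y) - 2 := by
  have hmem : ∀ c : ℤ, 0 ≤ c → c ≤ 1 →
      (c + 4) / (G.degree x : ℝ) + (7 - 2 * c) / (G.degree y : ℝ) - 2 ∈
        {r : ℝ | ∃ f : V → ℤ, (∀ u v : V, |f u - f v| ≤ (G.dist u v : ℤ)) ∧ f y - f x = 1 ∧
          r = graphLap G f x - graphLap G f y} := fun c hc₀ hc₁ => by
    obtain ⟨f, hf, hx, hy, hw, hz, hv, hU, hD⟩ := hc.exists_lipschitz hG hconn hc₀ hc₁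
    exact ⟨f, hf, by rw [hx, hy]; rfl, (hc.graphLap_sub_eq hx hy hw hz hv hU hD).symm⟩
  have hlow : ∀ r ∈ {r : ℝ | ∃ f : V → ℤ, (∀ u v : V, |f u - f v| ≤ (G.dist u v : ℤ)) ∧
      f y - f x = 1 ∧ r = graphLap G f x - graphLap G f y},
      min (4 / (G.degree x : ℝ) + 7 / G.degree y) (5 / G.degree x + 5 / G.degree y) - 2 ≤ r := by
    rintro r ⟨f, hf, hfxy, rfl⟩
    obtain ⟨a, b, ha₀, ha₁, hb₀, hb₁, h⟩ := hc.exists_le_graphLap_sub hf hfxy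
    have := min_le_add_div_add_div (dx := G.degree x) (dy := G.degree y)
      (by exact_mod_cast hc.adj_xy.degree_pos_left) (by exact_mod_cast hd) ha₀ ha₁ hb₀ hb₁
    linarith
  unfold llyCurv
  refine le_antisymm ?_ (le_csInf ⟨_, hmem 0 le_rfl zero_le_one⟩ hlow)
  rcases min_choice (4 / (G.degree x : ℝ) + 7 / G.degree y) (5 / G.degree x + 5 / G.degree y)
    with h | h <;> rw [h]
  · simpa using csInf_le ⟨_, hlow⟩ (hmem 0 le_rfl zero_le_one)
  · have := csInf_le ⟨_, hlow⟩ (hmem 1 zero_le_one le_rfl)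
    norm_num at this
    exact this

end InteriorConfig13

end InteriorConfig

/-- interior edge `xy` with common neighbors `w ≠ z`, where
`δ_xw = 0`, `δ_xz = 1`, `δ_yw = 1`, `δ_yz = 0`. -/
theorem interior_config_13 {V : Type*} [Fintype V]
    (G : SimpleGraph V) [DecidableRel G.Adj]
    (hmax : MaximalOuterplanar G)
    (x y w z : V) (hxy : G.Adj x y) (hd : G.degree x ≤ G.degree y)
    (hwz : w ≠ z)
    (hcom : G.neighborSet x ∩ G.neighborSet y = {w, z})
    (hxw : ((G.neighborSet x ∩ G.neighborSet w) \ {y}).ncard = 0)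
    (hxz : ((G.neighborSet x ∩ G.neighborSet z) \ {y}).ncard = 1)
    (hyw : ((G.neighborSet y ∩ G.neighborSet w) \ {x}).ncard = 1)
    (hyz : ((G.neighborSet y ∩ G.neighborSet z) \ {x}).ncard = 0) :
    (G.degree y < 2 * G.degree x →
      llyCurv G x y = 5 / (G.degree x : ℝ) + 5 / (G.degree y : ℝ) - 2) ∧
    (2 * G.degree x ≤ G.degree y →
      llyCurv G x y = 4 / (G.degree x : ℝ) + 7 / (G.degree y : ℝ) - 2) := by
  obtain ⟨u, v, hc⟩ := exists_interiorConfig13 hxy hwz hcom hxw hxz hyw hyz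
  rw [hc.llyCurv_eq hmax.1 ((connected_iff G).mpr ⟨hmax.preconnected, ⟨x⟩⟩) hd]
  have hdx : (0 : ℝ) < G.degree x := by exact_mod_cast hxy.degree_pos_left
  have hdy : (0 : ℝ) < G.degree y := by exact_mod_cast hxy.symm.degree_pos_left
  have hsub := four_div_add_seven_div_sub hdx.ne' hdy.ne'
  refine ⟨fun h => ?_, fun h => ?_⟩
  · have : (G.degree y : ℝ) < 2 * G.degree x := by exact_mod_cast h
    rw [min_eq_right]
    have := div_pos (by linarith : (0 : ℝ) < 2 * G.degree x - G.degree y) (mul_pos hdx hdy)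
    linarith
  · have : 2 * (G.degree x : ℝ) ≤ G.degree y := by exact_mod_cast h
    rw [min_eq_left]
    have := div_nonpos_of_nonpos_of_nonneg (by linarith : 2 * (G.degree x : ℝ) - G.degree y ≤ 0)
      (mul_pos hdx hdy).le
    linarith
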